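/- If G is dicotic and the game {(n−1)·↓ + * | 0} is formed for odd n ≥ 1, then {(n−1)·↓ + * | 0} is equivalent to n·↓; and for even n ≥ 2, {(n−1)·↓ | 0} is equivalent to n·↓ + *. -/

import Mathlib

universe u

noncomputable section

namespace SetTheory

/-- Pre-games, as in the older Mathlib `SetTheory.PGame` (removed from current Mathlib). -/
inductive PGame : Type (u + 1)
  | mk : ∀ α β : Type u, (α → PGame) → (β → PGame) → PGame

namespace PGame

def LeftMoves : PGame → Type u
  | mk l _ _ _ => l

def RightMoves : PGame → Type u
  | mk _ r _ _ => r

def moveLeft : ∀ g : PGame, LeftMoves g → PGame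
  | mk _l _ L _ => L

def moveRight : ∀ g : PGame, RightMoves g → PGame
  | mk _ _r _ R => R

instance : Zero PGame := ⟨⟨PEmpty, PEmpty, PEmpty.elim, PEmpty.elim⟩⟩

instance : One PGame := ⟨⟨PUnit, PEmpty, fun _ => 0, PEmpty.elim⟩⟩

def star : PGame.{u} := ⟨PUnit, PUnit, fun _ => 0, fun _ => 0⟩

def ofLists (L R : List PGame.{u}) : PGame.{u} :=
  mk (ULift (Fin L.length)) (ULift (Fin R.length)) (fun i => L.get i.down) fun j => R.get j.down

def neg : PGame → PGame
  | ⟨l, r, L, R⟩ => ⟨r, l, fun i => neg (R i), fun i => neg (L i)⟩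

instance : Neg PGame := ⟨neg⟩

def add (x y : PGame.{u}) : PGame.{u} := by
  induction x generalizing y with | mk xl xr _ _ IHxl IHxr => ?_
  induction y with | mk yl yr yL yR IHyl IHyr => ?_
  have y := mk yl yr yL yR
  refine ⟨xl ⊕ yl, xr ⊕ yr, Sum.rec ?_ ?_, Sum.rec ?_ ?_⟩
  · exact fun i => IHxl i y
  · exact IHyl
  · exact fun i => IHxr i y
  · exact IHyr

instance : Add PGame.{u} := ⟨add⟩

/-- The pair (x ≤ y, x ⧏ y), defined by simultaneous recursion as in the older Mathlib. -/
def leLF (x : PGame.{u}) : PGame.{u} → Prop × Prop := by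
  induction x with | mk xl xr xL xR IHxl IHxr => ?_
  intro y
  induction y with | mk yl yr yL yR IHyl IHyr => ?_
  exact ⟨(∀ i, (IHxl i ⟨yl, yr, yL, yR⟩).2) ∧ ∀ j, (IHyr j).2,
    (∃ i, (IHyl i).1) ∨ ∃ j, (IHxr j ⟨yl, yr, yL, yR⟩).1⟩

instance : LE PGame := ⟨fun x y => (leLF x y).1⟩

instance : LT PGame := ⟨fun x y => x ≤ y ∧ ¬y ≤ x⟩

def Equiv (x y : PGame) : Prop := x ≤ y ∧ y ≤ x

instance : HasEquiv PGame := ⟨Equiv⟩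

inductive IsOption : PGame → PGame → Prop
  | moveLeft {x : PGame} (i : x.LeftMoves) : IsOption (x.moveLeft i) x
  | moveRight {x : PGame} (i : x.RightMoves) : IsOption (x.moveRight i) x

theorem wf_isOption : WellFounded IsOption :=
  ⟨fun x => by
    induction x with
    | mk l r L R IHl IHr =>
      refine Acc.intro _ fun y h => ?_
      cases h with
      | moveLeft i => exact IHl i
      | moveRight j => exact IHr j⟩

instance : WellFoundedRelation PGame := ⟨IsOption, wf_isOption⟩

end PGame

end SetTheory
open SetTheory PGame
open scoped PGame

/-- The game up, ↑ = {0 | *}. -/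
def upG : PGame := ofLists [0] [star]

/-- The game down, ↓ = {* | 0}. -/
def downG : PGame := ofLists [star] [0]

/-- `copies n G` is the disjunctive sum of `n` copies of `G`. -/
def copies : ℕ → PGame → PGame
  | 0, _ => 0
  | n + 1, G => copies n G + G

/-- A game is dicotic (all-small) if either it has no options for either player, or
both players have at least one option and every option is dicotic. -/
def Dicotic (G : PGame) : Prop :=
  (IsEmpty G.LeftMoves ∧ IsEmpty G.RightMoves ∨
    Nonempty G.LeftMoves ∧ Nonempty G.RightMoves) ∧
    (∀ i, Dicotic (G.moveLeft i)) ∧ ∀ j, Dicotic (G.moveRight j)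
termination_by G
decreasing_by
  all_goals first
    | exact PGame.IsOption.moveLeft _
    | exact PGame.IsOption.moveRight _

/-- The dicotic transformation δ: every empty option set is replaced by the single option 0. -/
def delta : PGame → PGame
  | PGame.mk l r L R =>
    PGame.mk (l ⊕ PLift (IsEmpty l)) (r ⊕ PLift (IsEmpty r))
      (Sum.rec (fun i => delta (L i)) fun _ => 0)
      (Sum.rec (fun j => delta (R j)) fun _ => 0)

/-- A game is infinitesimal if every positive multiple lies strictly between -1 and 1. -/
def Infinitesimal (G : PGame) : Prop :=
  ∀ n : ℕ, 0 < n → copies n G < 1 ∧ -1 < copies n G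


/-!
Write `D m` for `m·↓`. Up to equivalence, the Left options of `D (m + 1) = D m + ↓` are `D m + *`
and its Right options are `D m`; comparing options then gives `D (m + 1) ≤ {D m + * | 0}` and
`D (m + 1) + * ≤ {D m | 0}` at once.

The converse of the first rests on `{D m + * | 0} ⧏ D m`, proved by induction on `m`: Left
answers in the last `↓` of `D m`, moving to `D (m - 1) + *`. The converse of the second is
`{D (m + 1) | 0} ≤ D j + *` for all `j ≤ m + 2`, proved by induction on `j`; the only extra input
is `{D (m + 1) | 0} ≤ {D (m - 1) + * | 0} ≤ D m`, where the first step is `↓ + ↓ ≤ *`.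
-/

namespace SetTheory.PGame

instance : IsEmpty (0 : PGame.{u}).LeftMoves := inferInstanceAs (IsEmpty PEmpty)
instance : IsEmpty (0 : PGame.{u}).RightMoves := inferInstanceAs (IsEmpty PEmpty)

instance : Inhabited star.{u}.LeftMoves := ⟨PUnit.unit⟩
instance : Inhabited star.{u}.RightMoves := ⟨PUnit.unit⟩

theorem le_def {x y : PGame.{u}} :
    x ≤ y ↔ (∀ i, (leLF (x.moveLeft i) y).2) ∧ ∀ j, (leLF x (y.moveRight j)).2 := by
  cases x; cases y; exact Iff.rfl

theorem leLF_snd_iff {x y : PGame.{u}} :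
    (leLF x y).2 ↔ (∃ i, x ≤ y.moveLeft i) ∨ ∃ j, x.moveRight j ≤ y := by
  cases x; cases y; exact Iff.rfl

/-- Both orders of the arguments are proved together: the induction step for one uses the
other. -/
theorem leLF_snd_iff_not_le (x y : PGame.{u}) :
    ((leLF x y).2 ↔ ¬y ≤ x) ∧ ((leLF y x).2 ↔ ¬x ≤ y) := by
  induction x generalizing y with
  | mk xl xr xL xR IHxl IHxr =>
  induction y with
  | mk yl yr yL yR IHyl IHyr =>
  constructor
  · rw [leLF_snd_iff, le_def, not_and_or, not_forall, not_forall]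
    exact or_congr (exists_congr fun i => ((not_congr (IHyl i).2).trans not_not).symm)
      (exists_congr fun j => ((not_congr (IHxr j _).2).trans not_not).symm)
  · rw [leLF_snd_iff, le_def, not_and_or, not_forall, not_forall]
    exact or_congr (exists_congr fun i => ((not_congr (IHxl i _).1).trans not_not).symm)
      (exists_congr fun j => ((not_congr (IHyr j).1).trans not_not).symm)

def LF (x y : PGame.{u}) : Prop := ¬y ≤ x

infixl:50 " ⧏ " => LF

theorem le_iff_forall_lf {x y : PGame.{u}} :
    x ≤ y ↔ (∀ i, x.moveLeft i ⧏ y) ∧ ∀ j, x ⧏ y.moveRight j := by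
  rw [le_def]
  simp only [fun a b => (leLF_snd_iff_not_le a b).1, LF]

theorem lf_iff_exists_le {x y : PGame.{u}} :
    x ⧏ y ↔ (∃ i, x ≤ y.moveLeft i) ∨ ∃ j, x.moveRight j ≤ y :=
  (leLF_snd_iff_not_le x y).1.symm.trans leLF_snd_iff

theorem lf_of_le_moveLeft {x y : PGame.{u}} {i : y.LeftMoves} (h : x ≤ y.moveLeft i) : x ⧏ y :=
  lf_iff_exists_le.2 (Or.inl ⟨i, h⟩)

theorem lf_of_moveRight_le {x y : PGame.{u}} {j : x.RightMoves} (h : x.moveRight j ≤ y) :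
    x ⧏ y :=
  lf_iff_exists_le.2 (Or.inr ⟨j, h⟩)

theorem le_zero_iff_forall_lf {x : PGame.{u}} : x ≤ 0 ↔ ∀ i, x.moveLeft i ⧏ 0 := by
  rw [le_iff_forall_lf]
  exact and_iff_left fun j => isEmptyElim j

theorem le_refl_aux (x : PGame.{u}) : x ≤ x := by
  induction x with
  | mk xl xr xL xR IHl IHr =>
  exact le_iff_forall_lf.2
    ⟨fun i => lf_of_le_moveLeft (IHl i), fun j => lf_of_moveRight_le (IHr j)⟩

theorem le_trans_aux {x y z : PGame.{u}}
    (h₁ : ∀ {i}, y ≤ z → z ≤ x.moveLeft i → y ≤ x.moveLeft i)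
    (h₂ : ∀ {j}, z.moveRight j ≤ x → x ≤ y → z.moveRight j ≤ y) (hxy : x ≤ y) (hyz : y ≤ z) :
    x ≤ z :=
  le_iff_forall_lf.2 ⟨fun i h => (le_iff_forall_lf.1 hxy).1 i (h₁ hyz h),
    fun j h => (le_iff_forall_lf.1 hyz).2 j (h₂ h hxy)⟩

/-- All three cyclic rotations of `x, y, z` are proved at once, so that the induction hypotheses
cover every position in which an option occurs. -/
theorem le_trans_cyclic (x y z : PGame.{u}) :
    (x ≤ y → y ≤ z → x ≤ z) ∧ (y ≤ z → z ≤ x → y ≤ x) ∧ (z ≤ x → x ≤ y → z ≤ y) := by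
  induction x generalizing y z with
  | mk xl xr xL xR IHxl IHxr =>
  induction y generalizing z with
  | mk yl yr yL yR IHyl IHyr =>
  induction z with
  | mk zl zr zL zR IHzl IHzr =>
  exact ⟨le_trans_aux (fun {i} => (IHxl i _ _).2.1) fun {j} => (IHzr j).2.2,
    le_trans_aux (fun {i} => (IHyl i _).2.2) fun {j} => (IHxr j _ _).1,
    le_trans_aux (fun {i} => (IHzl i).1) fun {j} => (IHyr j _).2.1⟩

instance : Preorder PGame.{u} where
  le_refl := le_refl_aux
  le_trans x y z := (le_trans_cyclic x y z).1
  lt_iff_le_not_ge _ _ := Iff.rfl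

theorem lf_of_le_of_lf {x y z : PGame.{u}} (h₁ : x ≤ y) (h₂ : y ⧏ z) : x ⧏ z :=
  fun h => h₂ (h.trans h₁)

theorem lf_of_lf_of_le {x y z : PGame.{u}} (h₁ : x ⧏ y) (h₂ : y ≤ z) : x ⧏ z :=
  fun h => h₁ (h₂.trans h)

theorem equiv_refl (x : PGame.{u}) : x ≈ x := ⟨le_rfl, le_rfl⟩

theorem Equiv.symm {x y : PGame.{u}} (h : x ≈ y) : y ≈ x := ⟨h.2, h.1⟩

theorem Equiv.trans {x y z : PGame.{u}} (h₁ : x ≈ y) (h₂ : y ≈ z) : x ≈ z :=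
  ⟨h₁.1.trans h₂.1, h₂.2.trans h₁.2⟩

theorem equiv_of_equiv_moves {x y : PGame.{u}} (L : x.LeftMoves ≃ y.LeftMoves)
    (R : x.RightMoves ≃ y.RightMoves) (hL : ∀ i, x.moveLeft i ≈ y.moveLeft (L i))
    (hR : ∀ j, x.moveRight j ≈ y.moveRight (R j)) : x ≈ y := by
  constructor <;> refine le_iff_forall_lf.2 ⟨fun i => ?_, fun j => ?_⟩
  · exact lf_of_le_moveLeft (hL i).1
  · obtain ⟨j, rfl⟩ := R.surjective j
    exact lf_of_moveRight_le (hR j).1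
  · obtain ⟨i, rfl⟩ := L.surjective i
    exact lf_of_le_moveLeft (hL i).2
  · exact lf_of_moveRight_le (hR j).2

section add

variable {x y z : PGame.{u}}

theorem forall_leftMoves_add {P : PGame.{u} → Prop} :
    (∀ i, P ((x + y).moveLeft i)) ↔ (∀ i, P (x.moveLeft i + y)) ∧ ∀ i, P (x + y.moveLeft i) := by
  cases x; cases y; exact Sum.forall

theorem forall_rightMoves_add {P : PGame.{u} → Prop} :
    (∀ j, P ((x + y).moveRight j)) ↔
      (∀ j, P (x.moveRight j + y)) ∧ ∀ j, P (x + y.moveRight j) := by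
  cases x; cases y; exact Sum.forall

theorem exists_leftMoves_add {P : PGame.{u} → Prop} :
    (∃ i, P ((x + y).moveLeft i)) ↔ (∃ i, P (x.moveLeft i + y)) ∨ ∃ i, P (x + y.moveLeft i) := by
  cases x; cases y; exact Sum.exists

theorem exists_rightMoves_add {P : PGame.{u} → Prop} :
    (∃ j, P ((x + y).moveRight j)) ↔
      (∃ j, P (x.moveRight j + y)) ∨ ∃ j, P (x + y.moveRight j) := by
  cases x; cases y; exact Sum.exists

theorem lf_add_of_le_moveLeft_add {i : y.LeftMoves} (h : x ≤ y.moveLeft i + z) : x ⧏ y + z :=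
  lf_iff_exists_le.2 (Or.inl ((exists_leftMoves_add (P := (x ≤ ·))).2 (Or.inl ⟨i, h⟩)))

theorem lf_add_of_le_add_moveLeft {i : z.LeftMoves} (h : x ≤ y + z.moveLeft i) : x ⧏ y + z :=
  lf_iff_exists_le.2 (Or.inl ((exists_leftMoves_add (P := (x ≤ ·))).2 (Or.inr ⟨i, h⟩)))

theorem add_lf_of_moveRight_add_le {j : x.RightMoves} (h : x.moveRight j + y ≤ z) : x + y ⧏ z :=
  lf_iff_exists_le.2 (Or.inr ((exists_rightMoves_add (P := (· ≤ z))).2 (Or.inl ⟨j, h⟩)))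

theorem add_lf_of_add_moveRight_le {j : y.RightMoves} (h : x + y.moveRight j ≤ z) : x + y ⧏ z :=
  lf_iff_exists_le.2 (Or.inr ((exists_rightMoves_add (P := (· ≤ z))).2 (Or.inr ⟨j, h⟩)))

theorem add_le_iff_forall_lf :
    x + y ≤ z ↔
      (∀ i, x.moveLeft i + y ⧏ z) ∧ (∀ i, x + y.moveLeft i ⧏ z) ∧ ∀ j, x + y ⧏ z.moveRight j := by
  rw [le_iff_forall_lf, forall_leftMoves_add (P := (· ⧏ z)), and_assoc]

theorem le_add_iff_forall_lf :
    z ≤ x + y ↔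
      (∀ i, z.moveLeft i ⧏ x + y) ∧ (∀ j, z ⧏ x.moveRight j + y) ∧ ∀ j, z ⧏ x + y.moveRight j := by
  rw [le_iff_forall_lf, forall_rightMoves_add (P := (z ⧏ ·))]

end add

theorem add_le_add_right_and_add_lf_add_right (x y z : PGame.{u}) :
    (x ≤ y → x + z ≤ y + z) ∧ (x ⧏ y → x + z ⧏ y + z) := by
  induction x generalizing y z with
  | mk xl xr xL xR IHxl IHxr =>
  induction y generalizing z with
  | mk yl yr yL yR IHyl IHyr =>
  induction z with
  | mk zl zr zL zR IHzl IHzr =>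
  constructor
  · intro h
    obtain ⟨hl, hr⟩ := le_iff_forall_lf.1 h
    refine add_le_iff_forall_lf.2 ⟨fun i => (IHxl i _ _).2 (hl i),
      fun k => lf_add_of_le_add_moveLeft ((IHzl k).1 h),
      (forall_rightMoves_add (P := (_ ⧏ ·))).2 ⟨fun j => ?_, fun k => ?_⟩⟩
    · exact (IHyr j _).2 (hr j)
    · exact add_lf_of_add_moveRight_le ((IHzr k).1 h)
  · intro h
    rcases lf_iff_exists_le.1 h with ⟨i, hi⟩ | ⟨j, hj⟩
    · exact lf_add_of_le_moveLeft_add ((IHyl i _).1 hi)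
    · exact add_lf_of_moveRight_add_le ((IHxr j _ _).1 hj)

theorem add_le_add_right' {x y : PGame.{u}} (h : x ≤ y) (z : PGame.{u}) : x + z ≤ y + z :=
  (add_le_add_right_and_add_lf_add_right x y z).1 h

theorem add_lf_add_right {x y : PGame.{u}} (h : x ⧏ y) (z : PGame.{u}) : x + z ⧏ y + z :=
  (add_le_add_right_and_add_lf_add_right x y z).2 h

theorem add_comm_equiv (x y : PGame.{u}) : x + y ≈ y + x := by
  induction x generalizing y with
  | mk xl xr xL xR IHxl IHxr =>
  induction y with
  | mk yl yr yL yR IHyl IHyr =>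
  refine equiv_of_equiv_moves (_root_.Equiv.sumComm _ _) (_root_.Equiv.sumComm _ _) ?_ ?_
  · rintro (i | i)
    · exact IHxl i _
    · exact IHyl i
  · rintro (j | j)
    · exact IHxr j _
    · exact IHyr j

theorem add_assoc_equiv (x y z : PGame.{u}) : x + y + z ≈ x + (y + z) := by
  induction x generalizing y z with
  | mk xl xr xL xR IHxl IHxr =>
  induction y generalizing z with
  | mk yl yr yL yR IHyl IHyr =>
  induction z with
  | mk zl zr zL zR IHzl IHzr =>
  refine equiv_of_equiv_moves (_root_.Equiv.sumAssoc _ _ _) (_root_.Equiv.sumAssoc _ _ _) ?_ ?_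
  · rintro ((i | i) | i)
    · exact IHxl i _ _
    · exact IHyl i _
    · exact IHzl i
  · rintro ((j | j) | j)
    · exact IHxr j _ _
    · exact IHyr j _
    · exact IHzr j

theorem add_zero_equiv (x : PGame.{u}) : x + 0 ≈ x := by
  induction x with
  | mk xl xr xL xR IHl IHr =>
  refine equiv_of_equiv_moves (_root_.Equiv.sumEmpty _ PEmpty) (_root_.Equiv.sumEmpty _ PEmpty)
    ?_ ?_
  · rintro (i | i)
    · exact IHl i
    · exact i.elim
  · rintro (j | j)
    · exact IHr j
    · exact j.elim

theorem add_le_add_left' {x y : PGame.{u}} (h : x ≤ y) (z : PGame.{u}) : z + x ≤ z + y :=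
  (add_comm_equiv z x).1.trans ((add_le_add_right' h z).trans (add_comm_equiv y z).1)

theorem add_congr_left {x y : PGame.{u}} (h : x ≈ y) (z : PGame.{u}) : x + z ≈ y + z :=
  ⟨add_le_add_right' h.1 z, add_le_add_right' h.2 z⟩

theorem add_congr_right {x y : PGame.{u}} (h : x ≈ y) (z : PGame.{u}) : z + x ≈ z + y :=
  ⟨add_le_add_left' h.1 z, add_le_add_left' h.2 z⟩

theorem add_right_comm_equiv (x y z : PGame.{u}) : x + y + z ≈ x + z + y :=
  (add_assoc_equiv x y z).trans
    ((add_congr_right (add_comm_equiv y z) x).trans (add_assoc_equiv x z y).symm)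

theorem star_add_star_equiv_zero : star.{u} + star ≈ 0 := by
  have h : (0 : PGame.{u}) + 0 ≈ 0 := add_zero_equiv 0
  constructor
  · exact add_le_iff_forall_lf.2 ⟨fun _ => add_lf_of_add_moveRight_le (j := default) h.1,
      fun _ => add_lf_of_moveRight_add_le (j := default) h.1, isEmptyElim⟩
  · exact le_add_iff_forall_lf.2 ⟨isEmptyElim,
      fun _ => lf_add_of_le_add_moveLeft (i := default) h.2,
      fun _ => lf_add_of_le_moveLeft_add (i := default) h.2⟩

theorem add_star_add_star_equiv (x : PGame.{u}) : x + star + star ≈ x :=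
  (add_assoc_equiv x star star).trans
    ((add_congr_right star_add_star_equiv_zero x).trans (add_zero_equiv x))

theorem lf_add_star_of_le {x y : PGame.{u}} (h : x ≤ y) : x ⧏ y + star :=
  lf_add_of_le_add_moveLeft (i := default) (h.trans (add_zero_equiv y).2)

theorem add_star_lf_of_le {x y : PGame.{u}} (h : x ≤ y) : x + star ⧏ y :=
  add_lf_of_add_moveRight_le (j := default) ((add_zero_equiv x).1.trans h)

section ofLists

variable {a b x y : PGame.{u}}

theorem moveLeft_ofLists_singleton (i) : (ofLists [a] [b]).moveLeft i = a := by
  obtain ⟨⟨_ | _, hi⟩⟩ := i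
  · rfl
  · simp at hi

theorem moveRight_ofLists_singleton (j) : (ofLists [a] [b]).moveRight j = b := by
  obtain ⟨⟨_ | _, hj⟩⟩ := j
  · rfl
  · simp at hj

theorem ofLists_singleton_le_iff :
    ofLists [a] [b] ≤ y ↔ a ⧏ y ∧ ∀ j, ofLists [a] [b] ⧏ y.moveRight j := by
  rw [le_iff_forall_lf]
  simp only [moveLeft_ofLists_singleton]
  exact and_congr_left' ⟨fun h => h ⟨⟨0, Nat.one_pos⟩⟩, fun h _ => h⟩

theorem le_ofLists_singleton_iff :
    x ≤ ofLists [a] [b] ↔ (∀ i, x.moveLeft i ⧏ ofLists [a] [b]) ∧ x ⧏ b := by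
  rw [le_iff_forall_lf]
  simp only [moveRight_ofLists_singleton]
  exact and_congr_right' ⟨fun h => h ⟨⟨0, Nat.one_pos⟩⟩, fun h _ => h⟩

theorem lf_ofLists_singleton_of_le (h : x ≤ a) : x ⧏ ofLists [a] [b] :=
  lf_of_le_moveLeft (i := ⟨⟨0, Nat.one_pos⟩⟩) h

theorem ofLists_singleton_lf_of_le (h : b ≤ y) : ofLists [a] [b] ⧏ y :=
  lf_of_moveRight_le (j := ⟨⟨0, Nat.one_pos⟩⟩) h

theorem ofLists_singleton_le_ofLists_singleton {c d : PGame.{u}} (hac : a ≤ c) (hbd : b ≤ d) :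
    ofLists [a] [b] ≤ ofLists [c] [d] :=
  ofLists_singleton_le_iff.2 ⟨lf_ofLists_singleton_of_le hac, fun j => by
    rw [moveRight_ofLists_singleton]; exact ofLists_singleton_lf_of_le hbd⟩

end ofLists

end SetTheory.PGame

section copies

variable {G L R : PGame.{u}}

theorem copies_succ (m : ℕ) (G : PGame.{u}) : copies (m + 1) G = copies m G + G := rfl

theorem moveLeft_copies_succ_equiv (hG : ∀ i, G.moveLeft i ≈ L) (m : ℕ) :
    ∀ i, (copies (m + 1) G).moveLeft i ≈ copies m G + L := by
  rw [copies_succ]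
  refine (forall_leftMoves_add (P := (· ≈ copies m G + L))).2
    ⟨fun i => ?_, fun i => add_congr_right (hG i) _⟩
  cases m with
  | zero => exact isEmptyElim (α := (0 : PGame.{u}).LeftMoves) i
  | succ k =>
    exact (add_congr_left (moveLeft_copies_succ_equiv hG k i) G).trans (add_right_comm_equiv _ _ _)

theorem moveRight_copies_succ_equiv (hG : ∀ j, G.moveRight j ≈ R) (m : ℕ) :
    ∀ j, (copies (m + 1) G).moveRight j ≈ copies m G + R := by
  rw [copies_succ]
  refine (forall_rightMoves_add (P := (· ≈ copies m G + R))).2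
    ⟨fun j => ?_, fun j => add_congr_right (hG j) _⟩
  cases m with
  | zero => exact isEmptyElim (α := (0 : PGame.{u}).RightMoves) j
  | succ k =>
    exact (add_congr_left (moveRight_copies_succ_equiv hG k j) G).trans (add_right_comm_equiv _ _ _)

end copies

section downG

variable {x : PGame.{u}} {m : ℕ}

instance : Inhabited downG.{u}.LeftMoves := ⟨(⟨⟨0, Nat.one_pos⟩⟩ : ULift (Fin 1))⟩
instance : Inhabited downG.{u}.RightMoves := ⟨(⟨⟨0, Nat.one_pos⟩⟩ : ULift (Fin 1))⟩

theorem downG_moveLeft (i) : downG.{u}.moveLeft i = star := moveLeft_ofLists_singleton i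

theorem downG_moveRight (j) : downG.{u}.moveRight j = 0 := moveRight_ofLists_singleton j

theorem moveLeft_copies_downG_succ_equiv (m : ℕ) (i) :
    (copies (m + 1) downG.{u}).moveLeft i ≈ copies m downG + star :=
  moveLeft_copies_succ_equiv (fun i => downG_moveLeft i ▸ equiv_refl _) m i

theorem moveRight_copies_downG_succ_equiv (m : ℕ) (j) :
    (copies (m + 1) downG.{u}).moveRight j ≈ copies m downG :=
  (moveRight_copies_succ_equiv (fun j => downG_moveRight j ▸ equiv_refl _) m j).trans
    (add_zero_equiv _)

theorem downG_le_zero : downG.{u} ≤ 0 :=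
  le_zero_iff_forall_lf.2 fun i => by
    rw [downG_moveLeft]
    exact lf_of_moveRight_le (j := default) le_rfl

theorem downG_add_downG_le_star : downG.{u} + downG ≤ star := by
  refine add_le_iff_forall_lf.2 ⟨fun i => ?_, fun i => ?_, fun _ => ?_⟩
  · rw [downG_moveLeft]
    refine add_lf_of_add_moveRight_le (j := default) ?_
    rw [downG_moveRight]
    exact (add_zero_equiv star).1
  · rw [downG_moveLeft]
    refine add_lf_of_moveRight_add_le (j := default) ?_
    rw [downG_moveRight]
    exact (add_comm_equiv 0 star).1.trans (add_zero_equiv star).1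
  · refine add_lf_of_add_moveRight_le (j := default) ?_
    rw [downG_moveRight]
    exact (add_zero_equiv downG).1.trans downG_le_zero

theorem copies_downG_succ_le (m : ℕ) : copies (m + 1) downG.{u} ≤ copies m downG :=
  (add_le_add_left' downG_le_zero _).trans (add_zero_equiv _).1

theorem copies_downG_antitone : Antitone fun m => copies m downG.{u} :=
  antitone_nat_of_succ_le copies_downG_succ_le

theorem copies_downG_le_zero (m : ℕ) : copies m downG.{u} ≤ 0 :=
  copies_downG_antitone (Nat.zero_le m)

theorem copies_downG_add_two_le (m : ℕ) : copies (m + 2) downG.{u} ≤ copies m downG + star :=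
  (add_assoc_equiv _ _ _).1.trans (add_le_add_left' downG_add_downG_le_star _)

theorem lf_copies_downG_succ_of_le (h : x ≤ copies m downG + star) : x ⧏ copies (m + 1) downG :=
  lf_add_of_le_add_moveLeft (i := default) (by rwa [downG_moveLeft])

theorem copies_downG_succ_lf_of_le (h : copies m downG ≤ x) : copies (m + 1) downG ⧏ x := by
  refine add_lf_of_add_moveRight_le (j := default) ?_
  rw [downG_moveRight]
  exact (add_zero_equiv _).1.trans h

theorem lf_copies_downG_add_star_of_le {i : ℕ} (h : x ≤ copies m downG) (hi : i ≤ m + 1) :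
    x ⧏ copies i downG + star := by
  cases i with
  | zero => exact lf_add_star_of_le (h.trans (copies_downG_le_zero m))
  | succ i =>
    have hx : x ≤ copies i downG + star + star :=
      h.trans ((copies_downG_antitone (by omega)).trans (add_star_add_star_equiv _).2)
    exact lf_of_le_of_lf hx (add_lf_add_right (lf_copies_downG_succ_of_le le_rfl) star)

end downG

section oddCase

theorem ofLists_copies_downG_add_star_le_succ_of_lf {m : ℕ}
    (h : ofLists [copies m downG.{u} + star] [0] ⧏ copies m downG) :
    ofLists [copies m downG.{u} + star] [0] ≤ copies (m + 1) downG :=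
  ofLists_singleton_le_iff.2 ⟨lf_copies_downG_succ_of_le le_rfl,
    fun j => lf_of_lf_of_le h (moveRight_copies_downG_succ_equiv m j).2⟩

theorem ofLists_copies_downG_add_star_lf (m : ℕ) :
    ofLists [copies m downG.{u} + star] [0] ⧏ copies m downG := by
  induction m with
  | zero => exact ofLists_singleton_lf_of_le le_rfl
  | succ k ih =>
    have hmono :
        ofLists [copies (k + 1) downG.{u} + star] [0] ≤ ofLists [copies k downG + star] [0] :=
      ofLists_singleton_le_ofLists_singleton (add_le_add_right' (copies_downG_succ_le k) _) le_rfl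
    refine lf_copies_downG_succ_of_le
      (le_add_iff_forall_lf.2 ⟨fun i => ?_, fun j => ?_, fun _ => ?_⟩)
    · rw [moveLeft_ofLists_singleton]
      exact add_lf_add_right (copies_downG_succ_lf_of_le le_rfl) _
    · cases k with
      | zero => exact isEmptyElim (α := (0 : PGame.{u}).RightMoves) j
      | succ i =>
        refine lf_of_lf_of_le (lf_add_star_of_le ?_)
          (add_congr_left (moveRight_copies_downG_succ_equiv i j) _).2
        exact hmono.trans ((ofLists_copies_downG_add_star_le_succ_of_lf ih).trans
          (copies_downG_antitone (by omega)))
    · exact lf_of_le_of_lf hmono (lf_of_lf_of_le ih (add_zero_equiv _).2)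

theorem ofLists_copies_downG_add_star_le_succ (m : ℕ) :
    ofLists [copies m downG.{u} + star] [0] ≤ copies (m + 1) downG :=
  ofLists_copies_downG_add_star_le_succ_of_lf (ofLists_copies_downG_add_star_lf m)

theorem copies_downG_succ_le_ofLists (m : ℕ) :
    copies (m + 1) downG.{u} ≤ ofLists [copies m downG + star] [0] :=
  le_ofLists_singleton_iff.2
    ⟨fun i => lf_ofLists_singleton_of_le (moveLeft_copies_downG_succ_equiv m i).1,
      copies_downG_succ_lf_of_le (copies_downG_le_zero m)⟩

end oddCase

section evenCase

theorem copies_downG_succ_add_star_le_ofLists (m : ℕ) :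
    copies (m + 1) downG.{u} + star ≤ ofLists [copies m downG] [0] := by
  refine le_ofLists_singleton_iff.2 ⟨?_, add_star_lf_of_le (copies_downG_le_zero _)⟩
  refine (forall_leftMoves_add (P := (· ⧏ _))).2 ⟨fun i => ?_, fun _ => ?_⟩
  · refine lf_ofLists_singleton_of_le ?_
    exact ((add_congr_left (moveLeft_copies_downG_succ_equiv m i) _).trans
      (add_star_add_star_equiv _)).1
  · exact lf_ofLists_singleton_of_le ((add_zero_equiv _).1.trans (copies_downG_succ_le m))

theorem ofLists_copies_downG_succ_le (m : ℕ) :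
    ofLists [copies (m + 1) downG.{u}] [0] ≤ copies m downG := by
  cases m with
  | zero =>
    exact ofLists_singleton_le_iff.2 ⟨copies_downG_succ_lf_of_le le_rfl,
      fun j => isEmptyElim (α := (0 : PGame.{u}).RightMoves) j⟩
  | succ k =>
    calc ofLists [copies (k + 2) downG] [0] ≤ ofLists [copies k downG + star] [0] :=
          ofLists_singleton_le_ofLists_singleton (copies_downG_add_two_le k) le_rfl
      _ ≤ copies (k + 1) downG := ofLists_copies_downG_add_star_le_succ k

theorem ofLists_copies_downG_succ_le_add_star {m j : ℕ} (hj : j ≤ m + 2) :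
    ofLists [copies (m + 1) downG.{u}] [0] ≤ copies j downG + star := by
  refine le_add_iff_forall_lf.2 ⟨fun i => ?_, fun r => ?_, fun _ => ?_⟩
  · rw [moveLeft_ofLists_singleton]
    exact lf_copies_downG_add_star_of_le le_rfl hj
  · cases j with
    | zero => exact isEmptyElim (α := (0 : PGame.{u}).RightMoves) r
    | succ i =>
      refine lf_of_lf_of_le ?_ (add_congr_left (moveRight_copies_downG_succ_equiv i r) _).2
      exact lf_copies_downG_add_star_of_le (ofLists_copies_downG_succ_le m) (by omega)
  · refine lf_of_lf_of_le ?_ (add_zero_equiv _).2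
    cases j with
    | zero => exact ofLists_singleton_lf_of_le le_rfl
    | succ i => exact lf_copies_downG_succ_of_le (ofLists_copies_downG_succ_le_add_star (by omega))

end evenCase

theorem stmt12 (n : ℕ) :
    (Odd n → 1 ≤ n → ofLists [copies (n - 1) downG + star] [0] ≈ copies n downG) ∧
    (Even n → 2 ≤ n → ofLists [copies (n - 1) downG] [0] ≈ copies n downG + star) := by
  refine ⟨fun _ hn => ?_, fun _ hn => ?_⟩
  · obtain ⟨m, rfl⟩ := Nat.exists_eq_add_of_le' hn
    exact ⟨ofLists_copies_downG_add_star_le_succ m, copies_downG_succ_le_ofLists m⟩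
  · obtain ⟨m, rfl⟩ := Nat.exists_eq_add_of_le' hn
    exact ⟨ofLists_copies_downG_succ_le_add_star le_rfl,
      copies_downG_succ_add_star_le_ofLists (m + 1)⟩
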